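/- arXiv:2512.06992 — 6 statements merged into one kernel-verified Lean document; each statement's English description precedes it below -/
import Mathlib

section
/- For every integer n ≥ 3 and every real x > 0, the polynomial g_n(x) = x^{2n} - 2^{n-1} x + 2^n (2^n - 3) is strictly positive. -/
/-! Split at `x = 2`. For `x ≤ 2` the linear term is at most `2^n`, which the constant
`2^n (2^n - 3)` exceeds as soon as `2^n > 4`; for `x ≥ 2` it is dominated by `x^(2n)`. -/

lemma two_pow_pred_mul_le_two_pow {n : ℕ} (hn : 1 ≤ n) {x : ℝ} (hx : x ≤ 2) :
    2 ^ (n - 1) * x ≤ 2 ^ n :=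
  calc 2 ^ (n - 1) * x ≤ 2 ^ (n - 1) * 2 := by gcongr
    _ = 2 ^ n := by rw [← pow_succ, Nat.sub_add_cancel hn]

lemma two_pow_pred_mul_le_pow {n : ℕ} (hn : 1 ≤ n) {x : ℝ} (hx : 2 ≤ x) :
    2 ^ (n - 1) * x ≤ x ^ (2 * n) :=
  calc 2 ^ (n - 1) * x ≤ x ^ (2 * n - 1) * x := by
        gcongr
        calc (2 : ℝ) ^ (n - 1) ≤ x ^ (n - 1) := by gcongr
          _ ≤ x ^ (2 * n - 1) := pow_le_pow_right₀ (by linarith) (by omega)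
    _ = x ^ (2 * n) := by rw [← pow_succ, Nat.sub_add_cancel (by omega)]

theorem stmt5_general (n : ℕ) (hn : 3 ≤ n) (x : ℝ) :
    0 < x ^ (2 * n) - 2 ^ (n - 1) * x + 2 ^ n * (2 ^ n - 3) := by
  have h8 : (8 : ℝ) ≤ 2 ^ n :=
    calc (8 : ℝ) = 2 ^ 3 := by norm_num
      _ ≤ 2 ^ n := pow_le_pow_right₀ one_le_two hn
  have hconst : (2 : ℝ) ^ n < 2 ^ n * (2 ^ n - 3) := by nlinarith
  rcases le_total x 2 with hx2 | hx2
  · have := two_pow_pred_mul_le_two_pow (by omega : 1 ≤ n) hx2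
    linarith [(even_two_mul n).pow_nonneg x]
  · have := two_pow_pred_mul_le_pow (by omega : 1 ≤ n) hx2
    linarith

/-- For every integer `n ≥ 3` and real `x > 0`, the polynomial
`g_n(x) = x^(2n) - 2^(n-1) x + 2^n (2^n - 3)` is strictly positive. -/
theorem stmt5 (n : ℕ) (hn : 3 ≤ n) (x : ℝ) (hx : 0 < x) :
    0 < x ^ (2 * n) - 2 ^ (n - 1) * x + 2 ^ n * (2 ^ n - 3) :=
  stmt5_general n hn x
end

section
/- Let n ≥ 3, a ∈ ℂ \ {0}, and b ∈ ℂ with b + 2√a = a^{1/(2n)} (the principal 2n-th root) and |b - 2√a| ≤ 2. Then for every z ∈ ℂ with |z| ≤ 2, one has |z - (b+2√a)| + |z - (b-2√a)| < 2(2^n + |a|/2^n). -/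
/-!
The disk `‖z‖ ≤ 2` contains the focus `v₋ = b - 2√a`, and the other focus `v₊` is a `2n`-th root
of `a`, so with `s = ‖v₊‖` we have `‖a‖ = s²ⁿ` and the focal sum at `z` is at most `(2 + s) + 4`,
while `2 (2ⁿ + s²ⁿ/2ⁿ) ≥ 2ⁿ + (2ⁿ + s²ⁿ/2ⁿ) ≥ 2ⁿ + 2sⁿ` by AM-GM. It remains to see
`6 + s < 2ⁿ + 2sⁿ`, which holds as soon as `2ⁿ ≥ 8` since `s < 2 + 2sⁿ`.
-/

open Complex

lemma norm_cpow_one_div_pow (a : ℂ) {m : ℕ} (hm : m ≠ 0) :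
    ‖a ^ ((1 : ℂ) / m)‖ ^ m = ‖a‖ := by
  rw [← norm_pow, one_div, cpow_nat_inv_pow a hm]

lemma two_mul_le_add_sq_div {x : ℝ} (hx : 0 < x) (r : ℝ) : 2 * r ≤ x + r ^ 2 / x := by
  rw [← sub_nonneg]
  have : x + r ^ 2 / x - 2 * r = (x - r) ^ 2 / x := by field_simp; ring
  rw [this]
  positivity

lemma lt_two_add_two_mul_pow {s : ℝ} (hs : 0 ≤ s) {n : ℕ} (hn : n ≠ 0) : s < 2 + 2 * s ^ n := by
  rcases lt_or_ge s 1 with hs1 | hs1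
  · nlinarith [pow_nonneg hs n]
  · nlinarith [le_self_pow₀ hs1 hn]

lemma six_add_lt_two_mul_two_pow_add_pow_div {n : ℕ} (hn : 3 ≤ n) {s : ℝ} (hs : 0 ≤ s) :
    6 + s < 2 * (2 ^ n + s ^ (2 * n) / 2 ^ n) := by
  have h8 : (8 : ℝ) ≤ 2 ^ n := by
    calc (8 : ℝ) = 2 ^ 3 := by norm_num
      _ ≤ 2 ^ n := pow_le_pow_right₀ (by norm_num) hn
  have amgm : 2 * s ^ n ≤ 2 ^ n + (s ^ n) ^ 2 / 2 ^ n :=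
    two_mul_le_add_sq_div (by positivity) (s ^ n)
  rw [← pow_mul, mul_comm n 2] at amgm
  have hdiv_nonneg : 0 ≤ s ^ (2 * n) / 2 ^ n := by positivity
  linarith [lt_two_add_two_mul_pow hs (n := n) (by omega)]

theorem stmt7_general (n : ℕ) (hn : 3 ≤ n) (a : ℂ) (b : ℂ)
    (hvp : b + 2 * a ^ ((1 : ℂ)/2) = a ^ ((1 : ℂ) / (2 * n)))
    (hvm : ‖b - 2 * a ^ ((1 : ℂ)/2)‖ ≤ 2)
    (z : ℂ) (hz : ‖z‖ ≤ 2) :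
    ‖z - (b + 2 * a ^ ((1 : ℂ)/2))‖ +
      ‖z - (b - 2 * a ^ ((1 : ℂ)/2))‖ <
      2 * (2 ^ n + ‖a‖ / 2 ^ n) := by
  set s := ‖a ^ ((1 : ℂ) / (2 * n))‖
  have hs : s ^ (2 * n) = ‖a‖ := by
    have h := norm_cpow_one_div_pow a (m := 2 * n) (by omega)
    push_cast at h
    exact h
  have dist_vp : ‖z - (b + 2 * a ^ ((1 : ℂ)/2))‖ ≤ 2 + s := by
    rw [hvp]
    linarith [norm_sub_le z (a ^ ((1 : ℂ) / (2 * n)))]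
  have dist_vm : ‖z - (b - 2 * a ^ ((1 : ℂ)/2))‖ ≤ 4 := by
    linarith [norm_sub_le z (b - 2 * a ^ ((1 : ℂ)/2))]
  have key := six_add_lt_two_mul_two_pow_add_pow_div hn (norm_nonneg _ : 0 ≤ s)
  rw [hs] at key
  linarith

/-- If `b + 2√a` equals the principal `2n`-th root of `a` and `|b - 2√a| ≤ 2`, then the
closed disk of radius `2` lies inside the ellipse with foci `b ± 2√a` and sum of focal
distances `2(2^n + |a|/2^n)`. -/
theorem stmt7 (n : ℕ) (hn : 3 ≤ n) (a : ℂ) (ha : a ≠ 0) (b : ℂ)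
    (hvp : b + 2 * a ^ ((1 : ℂ)/2) = a ^ ((1 : ℂ) / (2 * n)))
    (hvm : ‖b - 2 * a ^ ((1 : ℂ)/2)‖ ≤ 2)
    (z : ℂ) (hz : ‖z‖ ≤ 2) :
    ‖z - (b + 2 * a ^ ((1 : ℂ)/2))‖ +
      ‖z - (b - 2 * a ^ ((1 : ℂ)/2))‖ <
      2 * (2 ^ n + ‖a‖ / 2 ^ n) :=
  stmt7_general n hn a b hvp hvm z hz
end

section
/- Let n ≥ 2 and set α_k = (1 - e^{ikπ/n})/4 for an integer k with 1 ≤ k ≤ 2n-1. If a = α_k^{2n/(n-1)} (for a fixed branch), b = a^{1/(2n)} - 2√a, and v_- = b - 2√a, where roots are chosen consistently so that a^{1/(2n)} = α_k^{1/(n-1)} and √a = α_k^{n/(n-1)}, then (v_-)^n + a/(v_-)^n = (e^{ikπ} + e^{-ikπ}) · α_k^{n/(n-1)}; in particular R_{n,a,b}(v_-) - b equals -2√a if k is odd and +2√a if k is even. -/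
/-!
Since `β ^ (n - 1) = α`, the critical value `β - 4 β ^ n` equals `β (1 - 4 α) = β ζ` with
`ζ = e^{ikπ/n}`. Hence `v_-^n = β^n ζ^n` and `β^{2n} / v_-^n = β^n / ζ^n`, so the sum is
`(ζ^n + ζ^{-n}) β^n`, and `ζ^n = e^{ikπ} = (-1)^k`.
-/

open Complex Real

theorem mul_pow_add_pow_two_mul_div_mul_pow {K : Type*} [Field K] (z w : K) (n : ℕ) :
    (z * w) ^ n + z ^ (2 * n) / (z * w) ^ n = (w ^ n + (w ^ n)⁻¹) * z ^ n := by
  rw [mul_pow, pow_mul', sq]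
  by_cases hz : z ^ n = 0
  · simp [hz]
  · rw [mul_div_mul_left _ _ hz]
    ring

theorem sub_four_mul_pow_eq_mul_one_sub_four_mul {K : Type*} [CommRing K] {n : ℕ} (hn : n ≠ 0)
    {α β : K} (hβ : β ^ (n - 1) = α) : β - 4 * β ^ n = β * (1 - 4 * α) := by
  obtain ⟨m, rfl⟩ := Nat.exists_eq_add_one_of_ne_zero hn
  rw [← hβ, Nat.add_sub_cancel]
  ring

theorem Complex.exp_div_natCast_pow {n : ℕ} (hn : n ≠ 0) (z : ℂ) : exp (z / n) ^ n = exp z := by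
  rw [← exp_nat_mul, mul_div_cancel₀ _ (Nat.cast_ne_zero.mpr hn)]

theorem Complex.exp_I_mul_intCast_mul_pi (k : ℤ) : exp (I * k * π) = (-1) ^ k := by
  rw [show I * k * π = k * (π * I) by ring, exp_int_mul, exp_pi_mul_I]

theorem Complex.exp_I_mul_intCast_mul_pi_add_exp_neg (k : ℤ) :
    exp (I * k * π) + exp (-(I * k * π)) = 2 * (-1) ^ k := by
  rw [Complex.exp_neg, exp_I_mul_intCast_mul_pi, ← inv_zpow, inv_neg, inv_one]
  ring

theorem stmt8_general (n : ℕ) (hn : 2 ≤ n) (k : ℤ)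
    (α β : ℂ)
    (hα : α = (1 - Complex.exp (Complex.I * k * Real.pi / n)) / 4)
    (hβ : β ^ (n - 1) = α) :
    (β - 4 * β ^ n) ^ n + β ^ (2 * n) / (β - 4 * β ^ n) ^ n =
        (Complex.exp (Complex.I * k * Real.pi) + Complex.exp (-(Complex.I * k * Real.pi)))
          * β ^ n ∧
    (Odd k → (β - 4 * β ^ n) ^ n + β ^ (2 * n) / (β - 4 * β ^ n) ^ n = -(2 * β ^ n)) ∧
    (Even k → (β - 4 * β ^ n) ^ n + β ^ (2 * n) / (β - 4 * β ^ n) ^ n = 2 * β ^ n) := by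
  have hn0 : n ≠ 0 := by omega
  have hv : β - 4 * β ^ n = β * exp (I * k * π / n) := by
    rw [sub_four_mul_pow_eq_mul_one_sub_four_mul hn0 hβ, hα]
    ring
  have hmain : (β - 4 * β ^ n) ^ n + β ^ (2 * n) / (β - 4 * β ^ n) ^ n =
      (exp (I * k * π) + exp (-(I * k * π))) * β ^ n := by
    rw [hv, mul_pow_add_pow_two_mul_div_mul_pow, exp_div_natCast_pow hn0, Complex.exp_neg]
  refine ⟨hmain, fun hk => ?_, fun hk => ?_⟩ <;>
    rw [hmain, exp_I_mul_intCast_mul_pi_add_exp_neg]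
  · rw [hk.neg_one_zpow]; ring
  · rw [hk.neg_one_zpow]; ring

/-- At the parameter `a = α_k^(2n/(n-1))` with `α_k = (1 - e^{ikπ/n})/4`, realized via a
complex `β` with `β^(n-1) = α_k` (so `a = β^(2n)`, `a^(1/(2n)) = β`, `√a = β^n`,
`b = β - 2β^n`, `v_- = b - 2√a = β - 4β^n`), one has
`v_-^n + a/v_-^n = (e^{ikπ} + e^{-ikπ}) β^n`; in particular `R_{n,a,b}(v_-) - b` equals
`-2√a` when `k` is odd and `+2√a` when `k` is even. -/
theorem stmt8 (n : ℕ) (hn : 2 ≤ n) (k : ℤ) (hk : 1 ≤ k ∧ k ≤ 2 * n - 1)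
    (α β : ℂ)
    (hα : α = (1 - Complex.exp (Complex.I * k * Real.pi / n)) / 4) (hα0 : α ≠ 0)
    (hβ : β ^ (n - 1) = α) :
    (β - 4 * β ^ n) ^ n + β ^ (2 * n) / (β - 4 * β ^ n) ^ n =
        (Complex.exp (Complex.I * k * Real.pi) + Complex.exp (-(Complex.I * k * Real.pi)))
          * β ^ n ∧
    (Odd k → (β - 4 * β ^ n) ^ n + β ^ (2 * n) / (β - 4 * β ^ n) ^ n = -(2 * β ^ n)) ∧
    (Even k → (β - 4 * β ^ n) ^ n + β ^ (2 * n) / (β - 4 * β ^ n) ^ n = 2 * β ^ n) :=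
  stmt8_general n hn k α β hα hβ
end

section
/- For each fixed real x with 0 < x < 1, the function n ↦ x^{1/(2n)}(4 x^{(n-1)/(2n)} - 1) is decreasing in n for integers n ≥ 1, and its limit as n → ∞ is 4√x - 1. -/
/-! Since `1/(2n) + (n-1)/(2n) = 1/2`, the expression equals `4√x - x^(1/(2n))`. For `0 < x < 1`
the power `x^(1/(2n))` increases with `n` towards `x^0 = 1`, which gives both claims. -/

open Real Filter

lemma rpow_one_div_two_mul_mul_four_rpow_sub_one {x : ℝ} (hx : 0 < x) {n : ℝ} (hn : n ≠ 0) :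
    x ^ (1 / (2 * n)) * (4 * x ^ ((n - 1) / (2 * n)) - 1) = 4 * √x - x ^ (1 / (2 * n)) := by
  have hexp : 1 / (2 * n) + (n - 1) / (2 * n) = 1 / 2 := by
    field_simp
    ring
  rw [mul_sub, mul_one, mul_left_comm, ← rpow_add hx, hexp, sqrt_eq_rpow]

lemma rpow_one_div_two_mul_le_of_le {x : ℝ} (hx0 : 0 < x) (hx1 : x ≤ 1) {m n : ℝ}
    (hm : 0 < m) (hmn : m ≤ n) :
    x ^ (1 / (2 * m)) ≤ x ^ (1 / (2 * n)) :=
  rpow_le_rpow_of_exponent_ge hx0 hx1 (one_div_le_one_div_of_le (by positivity) (by linarith))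

lemma tendsto_rpow_one_div_two_mul_natCast {x : ℝ} (hx : 0 < x) :
    Tendsto (fun n : ℕ => x ^ (1 / (2 * (n : ℝ)))) atTop (nhds 1) := by
  have hexp : Tendsto (fun n : ℕ => 1 / (2 * (n : ℝ))) atTop (nhds 0) := by
    simp only [one_div]
    exact (tendsto_natCast_atTop_atTop.const_mul_atTop two_pos).inv_tendsto_atTop
  simpa using tendsto_const_nhds.rpow hexp (Or.inl hx.ne')

/-- For fixed `0 < x < 1`, `n ↦ x^(1/(2n)) (4 x^((n-1)/(2n)) - 1)` is decreasing for
integers `n ≥ 1` and tends to `4√x - 1` as `n → ∞`. -/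
theorem stmt11 (x : ℝ) (hx0 : 0 < x) (hx1 : x < 1) :
    (∀ m n : ℕ, 1 ≤ m → m ≤ n →
      x ^ (1 / (2 * (n : ℝ))) * (4 * x ^ (((n : ℝ) - 1) / (2 * (n : ℝ))) - 1) ≤
        x ^ (1 / (2 * (m : ℝ))) * (4 * x ^ (((m : ℝ) - 1) / (2 * (m : ℝ))) - 1)) ∧
    Tendsto (fun n : ℕ =>
        x ^ (1 / (2 * (n : ℝ))) * (4 * x ^ (((n : ℝ) - 1) / (2 * (n : ℝ))) - 1))
      atTop (nhds (4 * Real.sqrt x - 1)) := by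
  have hsimp {n : ℕ} (hn : 1 ≤ n) :=
    rpow_one_div_two_mul_mul_four_rpow_sub_one hx0 (n := n) (by positivity)
  constructor
  · intro m n hm hmn
    rw [hsimp hm, hsimp (hm.trans hmn)]
    have := rpow_one_div_two_mul_le_of_le hx0 hx1.le (by exact_mod_cast hm) (Nat.cast_le.mpr hmn)
    linarith
  · refine (tendsto_const_nhds.sub (tendsto_rpow_one_div_two_mul_natCast hx0)).congr' ?_
    filter_upwards [eventually_ge_atTop 1] with n hn
    exact (hsimp hn).symm
end

section
/- The function L(n) = |√(5/2) · e^{i·19π/20} + (3/32)^{1/(2n)} · e^{iπ/(20n)}| is decreasing for integers n ≥ 3, satisfies L(3) < 0.95 and L(4) < 0.87, and lim_{n→∞} L(n) = |√(5/2)·e^{i·19π/20} + 1| < 0.62. -/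
open Complex Real Filter

/-!
Writing `A = √(5/2)`, `r n = (3/32)^(1/(2n))` and `θ n = 19π/20 - π/(20n)`, the law of cosines
gives `L(n)² = A² + r n² + 2 A r n cos (θ n)`. As `n` grows, `r n` increases towards `1` and
`θ n` increases towards `19π/20`, so `cos (θ n)` decreases; since `A cos (θ n) ≤ -1`, the
quadratic `r² + 2 A r c` decreases in both `r ∈ [0, 1]` and `c`, hence `L` is decreasing. The
numerical bounds follow from `cos (π - x) ≤ x²/2 - 1` and lower bounds `r₀ < r n` obtained
from `r n ^ (2n) = 3/32`.
-/

lemma Complex.norm_ofReal_mul_exp_add_ofReal_mul_exp_sq (a b θ φ : ℝ) :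
    ‖(a : ℂ) * Complex.exp (I * θ) + (b : ℂ) * Complex.exp (I * φ)‖ ^ 2
      = a ^ 2 + b ^ 2 + 2 * a * b * Real.cos (θ - φ) := by
  rw [Complex.sq_norm, Complex.normSq_apply, mul_comm I (θ : ℂ), mul_comm I (φ : ℂ)]
  simp only [add_re, add_im, mul_re, mul_im, ofReal_re, ofReal_im, exp_ofReal_mul_I_re,
    exp_ofReal_mul_I_im, zero_mul, sub_zero, add_zero]
  rw [Real.cos_sub]
  nlinarith [Real.sin_sq_add_cos_sq θ, Real.sin_sq_add_cos_sq φ]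

lemma Real.cos_pi_sub_le (x : ℝ) : Real.cos (π - x) ≤ x ^ 2 / 2 - 1 := by
  rw [Real.cos_pi_sub]
  linarith [Real.one_sub_sq_div_two_le_cos (x := x)]

lemma sq_add_two_mul_mul_lt {A r₁ r₂ c₁ c₂ : ℝ} (hA : 0 < A) (hr₁ : 0 ≤ r₁) (hr : r₁ < r₂)
    (hr₂ : r₂ ≤ 1) (hc : c₂ ≤ c₁) (hAc : A * c₁ ≤ -1) :
    r₂ ^ 2 + 2 * A * r₂ * c₂ < r₁ ^ 2 + 2 * A * r₁ * c₁ := by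
  have hc_step : 2 * A * r₂ * c₂ ≤ 2 * A * r₂ * c₁ :=
    mul_le_mul_of_nonneg_left hc (by nlinarith)
  have hr_step : r₂ ^ 2 + 2 * A * r₂ * c₁ - (r₁ ^ 2 + 2 * A * r₁ * c₁)
      = (r₂ - r₁) * (r₂ + r₁ + 2 * (A * c₁)) := by ring
  have hr_neg : (r₂ - r₁) * (r₂ + r₁ + 2 * (A * c₁)) < 0 :=
    mul_neg_of_pos_of_neg (by linarith) (by linarith)
  linarith

lemma lt_sqrt_five_div_two : (1.5811 : ℝ) < √(5 / 2) := by
  rw [Real.lt_sqrt (by norm_num)]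
  norm_num

noncomputable def criticalValueBound (n : ℕ) : ℝ :=
  ‖((√(5/2) : ℝ) : ℂ) * Complex.exp (I * (19 * π / 20)) +
    (((3/32 : ℝ) ^ (1 / (2 * (n : ℝ))) : ℝ) : ℂ) * Complex.exp (I * (π / (20 * (n : ℝ))))‖

noncomputable def radius (n : ℕ) : ℝ := (3/32 : ℝ) ^ (1 / (2 * (n : ℝ)))

noncomputable def angle (n : ℕ) : ℝ := 19 * π / 20 - π / (20 * n)

lemma radius_pos (n : ℕ) : 0 < radius n :=
  Real.rpow_pos_of_pos (by norm_num) _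

lemma radius_le_one (n : ℕ) : radius n ≤ 1 :=
  Real.rpow_le_one (by norm_num) (by norm_num) (by positivity)

lemma radius_lt_radius {m n : ℕ} (hm : 0 < m) (hmn : m < n) : radius m < radius n := by
  have hm' : (0 : ℝ) < m := by exact_mod_cast hm
  have hmn' : (m : ℝ) < n := by exact_mod_cast hmn
  refine Real.rpow_lt_rpow_of_exponent_gt (by norm_num) (by norm_num) ?_
  exact one_div_lt_one_div_of_lt (by positivity) (by linarith)

lemma radius_pow {n : ℕ} (hn : n ≠ 0) : radius n ^ (2 * n) = 3 / 32 := by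
  rw [radius, ← Real.rpow_natCast, ← Real.rpow_mul (by norm_num)]
  have hexp : (1 / (2 * (n : ℝ))) * ((2 * n : ℕ) : ℝ) = 1 := by
    push_cast
    field_simp
  rw [hexp, Real.rpow_one]

lemma lt_radius_of_pow_lt {n : ℕ} (hn : n ≠ 0) {x : ℝ} (h : x ^ (2 * n) < 3 / 32) :
    x < radius n := by
  rw [← radius_pow hn] at h
  exact lt_of_pow_lt_pow_left₀ _ (radius_pos n).le h

lemma tendsto_radius : Tendsto radius atTop (nhds 1) := by
  have h := (Real.continuousAt_const_rpow (a := (3/32 : ℝ)) (by norm_num)).tendsto.comp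
    ((tendsto_const_div_atTop_nhds_zero_nat (1 / 2 : ℝ)))
  rw [Real.rpow_zero] at h
  refine h.congr fun n => ?_
  simp only [Function.comp_apply, radius]
  ring_nf

lemma angle_eq (n : ℕ) : angle n = π - π / 20 * (1 + 1 / n) := by
  rw [angle]
  ring

lemma angle_mem_Icc {n : ℕ} (hn : 0 < n) : angle n ∈ Set.Icc 0 π := by
  have hn' : (1 : ℝ) ≤ n := by exact_mod_cast hn
  have h_inv_le : 1 / (n : ℝ) ≤ 1 := by rw [div_le_one (by linarith)]; exact hn'
  rw [angle_eq]
  constructor <;> nlinarith [Real.pi_pos, one_div_pos.2 (show (0 : ℝ) < n by linarith)]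

lemma angle_lt_angle {m n : ℕ} (hm : 0 < m) (hmn : m < n) : angle m < angle n := by
  have hm' : (0 : ℝ) < m := by exact_mod_cast hm
  have hmn' : (m : ℝ) < n := by exact_mod_cast hmn
  rw [angle, angle]
  have h_div := div_lt_div_of_pos_left Real.pi_pos (by positivity) (by linarith : 20 * (m : ℝ) < 20 * n)
  linarith

lemma cos_angle_le (n : ℕ) : Real.cos (angle n) ≤ (π / 20 * (1 + 1 / n)) ^ 2 / 2 - 1 := by
  rw [angle_eq]
  exact Real.cos_pi_sub_le _

lemma cos_angle_le_neg_nine_tenths {n : ℕ} (hn : 0 < n) : Real.cos (angle n) ≤ -9 / 10 := by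
  have hn' : (1 : ℝ) ≤ n := by exact_mod_cast hn
  have h1 : 1 / (n : ℝ) ≤ 1 := by rw [div_le_one (by linarith)]; exact hn'
  have h0 : 0 ≤ 1 / (n : ℝ) := by positivity
  have hx : π / 20 * (1 + 1 / n) ≤ 0.32 := by nlinarith [Real.pi_lt_d6, Real.pi_pos]
  have hx0 : 0 ≤ π / 20 * (1 + 1 / n) := by positivity
  nlinarith [cos_angle_le n]

lemma criticalValueBound_sq (n : ℕ) :
    criticalValueBound n ^ 2
      = 5 / 2 + radius n ^ 2 + 2 * √(5 / 2) * radius n * Real.cos (angle n) := by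
  have h := Complex.norm_ofReal_mul_exp_add_ofReal_mul_exp_sq (√(5 / 2)) (radius n)
    (19 * π / 20) (π / (20 * n))
  rw [Real.sq_sqrt (by norm_num)] at h
  rw [angle, ← h, criticalValueBound, radius]
  norm_cast

lemma criticalValueBound_lt {m n : ℕ} (hm : 0 < m) (hmn : m < n) :
    criticalValueBound n < criticalValueBound m := by
  have hA : 0 < √(5 / 2) := by positivity
  have hAc : √(5 / 2) * Real.cos (angle m) ≤ -1 := by
    nlinarith [lt_sqrt_five_div_two, cos_angle_le_neg_nine_tenths hm]
  have hc : Real.cos (angle n) < Real.cos (angle m) :=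
    Real.strictAntiOn_cos (angle_mem_Icc hm) (angle_mem_Icc (hm.trans hmn))
      (angle_lt_angle hm hmn)
  refine lt_of_pow_lt_pow_left₀ 2 (norm_nonneg _) ?_
  rw [criticalValueBound_sq, criticalValueBound_sq]
  linarith [sq_add_two_mul_mul_lt hA (radius_pos m).le (radius_lt_radius hm hmn)
    (radius_le_one n) hc.le hAc]

lemma criticalValueBound_lt_of_bounds {n : ℕ} (hn : n ≠ 0) {r₀ c₀ B : ℝ} (hr₀ : 0 ≤ r₀)
    (hr₀_pow : r₀ ^ (2 * n) < 3 / 32) (hc₀ : Real.cos (angle n) ≤ c₀)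
    (hc₀_neg : 1.5811 * c₀ ≤ -1) (hB : 0 ≤ B)
    (hB_sq : 5 / 2 + r₀ ^ 2 + 2 * 1.5811 * r₀ * c₀ ≤ B ^ 2) :
    criticalValueBound n < B := by
  have hA := lt_sqrt_five_div_two
  have hlt := sq_add_two_mul_mul_lt (A := √(5 / 2)) (by positivity) hr₀
    (lt_radius_of_pow_lt hn hr₀_pow) (radius_le_one n) hc₀ (by nlinarith)
  refine lt_of_pow_lt_pow_left₀ 2 hB ?_
  rw [criticalValueBound_sq]
  nlinarith [mul_nonneg hr₀ (by linarith : 0 ≤ -c₀)]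

lemma criticalValueBound_three_lt : criticalValueBound 3 < 0.95 := by
  refine criticalValueBound_lt_of_bounds (r₀ := 0.67) (c₀ := -0.978) (by norm_num) (by norm_num)
    (by norm_num) ?_ (by norm_num) (by norm_num) (by norm_num)
  have := cos_angle_le 3
  norm_num at this
  nlinarith [Real.pi_lt_d6, Real.pi_pos]

lemma criticalValueBound_four_lt : criticalValueBound 4 < 0.87 := by
  refine criticalValueBound_lt_of_bounds (r₀ := 0.743) (c₀ := -0.9807) (by norm_num)
    (by norm_num) (by norm_num) ?_ (by norm_num) (by norm_num) (by norm_num)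
  have := cos_angle_le 4
  norm_num at this
  nlinarith [Real.pi_lt_d6, Real.pi_pos]

lemma tendsto_criticalValueBound :
    Tendsto criticalValueBound atTop
      (nhds ‖((√(5/2) : ℝ) : ℂ) * Complex.exp (I * (19 * π / 20)) + 1‖) := by
  have hθ : Tendsto (fun n : ℕ => I * ((π : ℂ) / (20 * ((n : ℝ) : ℂ)))) atTop (nhds 0) := by
    have := (tendsto_const_div_atTop_nhds_zero_nat ((π : ℂ) / 20)).const_mul I
    rw [mul_zero] at this
    refine this.congr fun n => ?_
    push_cast
    ring
  have hw := ((continuous_ofReal.tendsto 1).comp tendsto_radius).mul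
    ((Complex.continuous_exp.tendsto 0).comp hθ)
  simp only [ofReal_one, Complex.exp_zero, mul_one] at hw
  exact (hw.const_add _).norm

lemma norm_sqrt_mul_exp_add_one_lt :
    ‖((√(5/2) : ℝ) : ℂ) * Complex.exp (I * (19 * π / 20)) + 1‖ < 0.62 := by
  have h := Complex.norm_ofReal_mul_exp_add_ofReal_mul_exp_sq (√(5 / 2)) 1 (19 * π / 20) 0
  push_cast at h
  simp only [mul_zero, Complex.exp_zero, mul_one, sub_zero] at h
  rw [Real.sq_sqrt (by norm_num)] at h
  have hcos : Real.cos (19 * π / 20) ≤ -0.9876 := by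
    rw [show 19 * π / 20 = π - π / 20 by ring]
    nlinarith [Real.cos_pi_sub_le (π / 20), Real.pi_lt_d6, Real.pi_pos]
  refine lt_of_pow_lt_pow_left₀ 2 (by norm_num) ?_
  rw [h]
  nlinarith [lt_sqrt_five_div_two, mul_le_mul_of_nonneg_left hcos (Real.sqrt_nonneg (5 / 2))]

/-- The function `L(n) = |√(5/2) e^{i19π/20} + (3/32)^(1/(2n)) e^{iπ/(20n)}|` is
decreasing for integers `n ≥ 3`, satisfies `L(3) < 0.95`, `L(4) < 0.87`, and tends to
`|√(5/2) e^{i19π/20} + 1| < 0.62` as `n → ∞`. -/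
theorem stmt15 :
    ∀ L : ℕ → ℝ,
      (L = fun n : ℕ =>
        Norm.norm (((Real.sqrt (5/2) : ℝ) : ℂ) *
            Complex.exp (Complex.I * (19 * Real.pi / 20)) +
          (((3/32 : ℝ) ^ (1 / (2 * (n : ℝ))) : ℝ) : ℂ) *
            Complex.exp (Complex.I * (Real.pi / (20 * (n : ℝ)))))) →
      (∀ m n : ℕ, 3 ≤ m → m < n → L n < L m) ∧
      L 3 < 0.95 ∧ L 4 < 0.87 ∧
      Tendsto L atTop (nhds (Norm.norm (((Real.sqrt (5/2) : ℝ) : ℂ) *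
          Complex.exp (Complex.I * (19 * Real.pi / 20)) + 1))) ∧
      Norm.norm (((Real.sqrt (5/2) : ℝ) : ℂ) *
          Complex.exp (Complex.I * (19 * Real.pi / 20)) + 1) < 0.62 := by
  rintro L rfl
  exact ⟨fun m n hm hmn => criticalValueBound_lt (by omega) hmn, criticalValueBound_three_lt,
    criticalValueBound_four_lt, tendsto_criticalValueBound, norm_sqrt_mul_exp_add_one_lt⟩
end

section
/- For each integer n ≥ 2, the 2n-1 complex numbers a_k = ((1 - e^{ikπ/n})/4)^{2n/(n-1)}, k = 1, ..., 2n-1 (for a fixed branch of the power), are exactly the nonzero solutions of the equation |a|^{1/(2n)} e^{iψ/(2n)} - 4√a = |a|^{1/(2n)} e^{i(ψ + 2kπ)/(2n)} for some k ∈ {1,...,2n-1}, where ψ = Arg(a) and √a is the principal square root; equivalently, they are the parameters a for which the free critical value v_- = b_{n,0}(a) - 2√a equals a non-principal 2n-th root of a. -/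
/-!
With `w = a^{1/(2n)}` the principal root, the equation reads `w (1 - e^{ikπ/n}) = 4√a`, that is
`a^{(n-1)/(2n)} = c_k := (1 - e^{ikπ/n})/4`. As `0 < (n-1)/(2n) < 1`, the principal power
`a ↦ a^{(n-1)/(2n)}` is inverted by `z ↦ z^{2n/(n-1)}`, so `a = c_k^{2n/(n-1)}`.
Conversely `c_k = (sin(kπ/2n)/2) e^{i(kπ/2n - π/2)}`, so `arg c_k · 2n/(n-1) = π(k-n)/(n-1)`.
For `2 ≤ k ≤ 2n-1` this lies in `(-π, π]` and `(c_k^{2n/(n-1)})^{(n-1)/(2n)} = c_k`; for `k = 1`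
it is `-π`, and `a_1 = a_{2n-1}` is the negative real solution belonging to `k = 2n-1`.
-/

open Complex Real

lemma one_sub_exp_mul_I (θ : ℝ) :
    1 - exp (θ * I) = (2 * Real.sin (θ / 2) : ℝ) * exp ((θ / 2 - π / 2 : ℝ) * I) := by
  have hθ : exp (θ * I) = exp ((θ / 2 : ℝ) * I) ^ 2 := by
    rw [← Complex.exp_nat_mul]; push_cast; ring_nf
  have hπ : exp ((θ / 2 - π / 2 : ℝ) * I) = exp ((θ / 2 : ℝ) * I) * -I := by
    rw [show ((θ / 2 - π / 2 : ℝ) : ℂ) * I = (θ / 2 : ℝ) * I + -(π / 2 * I) by push_cast; ring,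
      Complex.exp_add, Complex.exp_neg, exp_pi_div_two_mul_I, inv_I]
  have h1 : exp ((θ / 2 : ℝ) * I) * exp (-(θ / 2 : ℝ) * I) = 1 := by
    rw [← Complex.exp_add]; simp
  rw [hθ, hπ, ofReal_mul, ofReal_sin, ofReal_ofNat]
  linear_combination (exp ((θ / 2 : ℝ) * I) * I) * two_sin (θ / 2 : ℝ) - h1 +
    (exp ((θ / 2 : ℝ) * I) * exp (-(θ / 2 : ℝ) * I) - exp ((θ / 2 : ℝ) * I) ^ 2) * I_sq

lemma norm_one_sub_exp_mul_I (θ : ℝ) : ‖1 - exp (θ * I)‖ = 2 * |Real.sin (θ / 2)| := by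
  rw [one_sub_exp_mul_I, norm_mul, norm_exp_ofReal_mul_I, mul_one, norm_real, Real.norm_eq_abs,
    abs_mul, abs_two]

lemma arg_one_sub_exp_mul_I {θ : ℝ} (h₀ : 0 < θ) (h₂ : θ < 2 * π) :
    arg (1 - exp (θ * I)) = θ / 2 - π / 2 := by
  have hsin : 0 < 2 * Real.sin (θ / 2) :=
    mul_pos two_pos (Real.sin_pos_of_pos_of_lt_pi (by linarith) (by linarith))
  rw [one_sub_exp_mul_I, exp_mul_I]
  exact arg_mul_cos_add_sin_mul_I hsin (θ := θ / 2 - π / 2)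
    ⟨by linarith, by linarith [Real.pi_pos]⟩

lemma one_sub_exp_mul_I_ne_zero {θ : ℝ} (h₀ : 0 < θ) (h₂ : θ < 2 * π) :
    1 - exp (θ * I) ≠ 0 := by
  rw [← norm_pos_iff, norm_one_sub_exp_mul_I]
  have := Real.sin_pos_of_pos_of_lt_pi (x := θ / 2) (by linarith) (by linarith)
  positivity

lemma cpow_ofReal_eq {a : ℂ} (ha : a ≠ 0) (r : ℝ) :
    a ^ (r : ℂ) = (‖a‖ ^ r : ℝ) * exp (arg a * r * I) := by
  rw [cpow_def_of_ne_zero ha, Real.rpow_def_of_pos (norm_pos_iff.mpr ha), ofReal_exp,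
    ← Complex.exp_add]
  congr 1
  apply Complex.ext <;> simp [log_re, log_im]

lemma cpow_ofReal_cpow_inv {z : ℂ} {r : ℝ} (hr : r ≠ 0) (h₁ : -π < arg z * r)
    (h₂ : arg z * r ≤ π) : (z ^ (r : ℂ)) ^ ((r⁻¹ : ℝ) : ℂ) = z := by
  rw [← cpow_mul _ (by simpa [log_im] using h₁) (by simpa [log_im] using h₂), ← ofReal_mul,
    mul_inv_cancel₀ hr, ofReal_one, cpow_one]

lemma cpow_ofReal_eq_of_arg_eq_add_two_pi {z w : ℂ} {r : ℝ} (hzw : ‖z‖ = ‖w‖)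
    (h : arg w * r = arg z * r + 2 * π) : z ^ (r : ℂ) = w ^ (r : ℂ) := by
  rcases eq_or_ne z 0 with rfl | hz
  · rw [norm_zero, eq_comm, norm_eq_zero] at hzw
    rw [hzw]
  have hw : w ≠ 0 := norm_ne_zero_iff.mp (hzw ▸ norm_ne_zero_iff.mpr hz)
  rw [cpow_ofReal_eq hz, cpow_ofReal_eq hw, hzw, ← ofReal_mul, ← ofReal_mul, h]
  push_cast
  rw [add_mul, Complex.exp_add, exp_two_pi_mul_I, mul_one]

lemma cpow_ofReal_cpow_inv_of_pos_of_le_one {r : ℝ} (h₀ : 0 < r) (h₁ : r ≤ 1) (z : ℂ) :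
    (z ^ (r : ℂ)) ^ ((r⁻¹ : ℝ) : ℂ) = z :=
  cpow_ofReal_cpow_inv h₀.ne'
    (by nlinarith [neg_pi_lt_arg z, Real.pi_pos]) (by nlinarith [arg_le_pi z, Real.pi_pos])

/-- `c_k` of the header: `a` solves the `k`-th equation iff `a ^ rootExp n = rootParam n k`. -/
noncomputable def rootParam (n k : ℕ) : ℂ := (1 - exp (I * k * π / n)) / 4

noncomputable def rootExp (n : ℕ) : ℝ := (n - 1) / (2 * n)

lemma rootParam_eq (n k : ℕ) : rootParam n k = (1 - exp ((k * π / n : ℝ) * I)) / 4 := by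
  rw [rootParam]; push_cast; ring_nf

lemma natCast_mul_pi_div_mem_Ioo {n k : ℕ} (hk₁ : 1 ≤ k) (hk₂ : k < 2 * n) :
    k * π / n ∈ Set.Ioo 0 (2 * π) := by
  have hn : (0 : ℝ) < n := by exact_mod_cast (show 0 < n by omega)
  have hk : (k : ℝ) < 2 * n := by exact_mod_cast hk₂
  refine ⟨by positivity, ?_⟩
  rw [div_lt_iff₀ hn]
  nlinarith [Real.pi_pos]

lemma rootParam_ne_zero {n k : ℕ} (hk₁ : 1 ≤ k) (hk₂ : k < 2 * n) : rootParam n k ≠ 0 := by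
  obtain ⟨h₀, h₂⟩ := natCast_mul_pi_div_mem_Ioo hk₁ hk₂
  rw [rootParam_eq]
  exact div_ne_zero (one_sub_exp_mul_I_ne_zero h₀ h₂) (by norm_num)

lemma arg_rootParam {n k : ℕ} (hk₁ : 1 ≤ k) (hk₂ : k < 2 * n) :
    arg (rootParam n k) = k * π / (2 * n) - π / 2 := by
  obtain ⟨h₀, h₂⟩ := natCast_mul_pi_div_mem_Ioo hk₁ hk₂
  rw [rootParam_eq, div_eq_mul_inv, show (4 : ℂ)⁻¹ = ((4⁻¹ : ℝ) : ℂ) by push_cast; rfl,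
    arg_mul_real (by norm_num), arg_one_sub_exp_mul_I h₀ h₂]
  ring

lemma norm_rootParam (n k : ℕ) : ‖rootParam n k‖ = |Real.sin (k * π / (2 * n))| / 2 := by
  rw [rootParam_eq, norm_div, norm_one_sub_exp_mul_I, RCLike.norm_ofNat]
  ring_nf

lemma cpow_rootExp_cpow_inv {n : ℕ} (hn : 2 ≤ n) (z : ℂ) :
    (z ^ (rootExp n : ℂ)) ^ (((rootExp n)⁻¹ : ℝ) : ℂ) = z := by
  have hn' : (2 : ℝ) ≤ n := by exact_mod_cast hn
  refine cpow_ofReal_cpow_inv_of_pos_of_le_one ?_ ?_ z <;> rw [rootExp]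
  · exact div_pos (by linarith) (by linarith)
  · rw [div_le_one (by linarith)]; linarith

lemma rootParam_cpow_cpow_rootExp {n k : ℕ} (hk₁ : 2 ≤ k) (hk₂ : k < 2 * n) :
    (rootParam n k ^ (((rootExp n)⁻¹ : ℝ) : ℂ)) ^ (rootExp n : ℂ) = rootParam n k := by
  have hn : (1 : ℝ) < n := by exact_mod_cast (show 1 < n by omega)
  have hk : (2 : ℝ) ≤ k := by exact_mod_cast hk₁
  have hk' : (k : ℝ) + 1 ≤ 2 * n := by exact_mod_cast hk₂
  have harg : arg (rootParam n k) * (rootExp n)⁻¹ = π * ((k - n) / (n - 1)) := by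
    rw [arg_rootParam (by omega) hk₂, rootExp]
    field_simp
  have hlo : -1 < ((k : ℝ) - n) / (n - 1) := by rw [lt_div_iff₀ (by linarith)]; linarith
  have hhi : ((k : ℝ) - n) / (n - 1) ≤ 1 := by rw [div_le_one (by linarith)]; linarith
  have := cpow_ofReal_cpow_inv (z := rootParam n k) (r := (rootExp n)⁻¹)
    (inv_ne_zero (div_pos (by linarith) (by linarith)).ne')
    (by rw [harg]; nlinarith [Real.pi_pos]) (by rw [harg]; nlinarith [Real.pi_pos])
  rwa [inv_inv] at this

lemma rootParam_one_cpow_eq_rootParam_two_mul_sub_one_cpow {n : ℕ} (hn : 2 ≤ n) :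
    rootParam n 1 ^ (((rootExp n)⁻¹ : ℝ) : ℂ) =
      rootParam n (2 * n - 1) ^ (((rootExp n)⁻¹ : ℝ) : ℂ) := by
  have hn' : (1 : ℝ) < n := by exact_mod_cast (show 1 < n by omega)
  have hn₁ : (n : ℝ) - 1 ≠ 0 := by linarith
  have hcast : ((2 * n - 1 : ℕ) : ℝ) = 2 * n - 1 := by
    push_cast [Nat.cast_sub (by omega : 1 ≤ 2 * n)]
    ring
  apply cpow_ofReal_eq_of_arg_eq_add_two_pi
  · rw [norm_rootParam, norm_rootParam, hcast,
      show (2 * n - 1 : ℝ) * π / (2 * n) = π - 1 * π / (2 * n) by field_simp, Real.sin_pi_sub]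
    norm_num
  · rw [arg_rootParam le_rfl (by omega), arg_rootParam (by omega) (by omega), hcast, rootExp]
    field_simp
    ring

lemma criticalValue_eq_root_iff {n : ℕ} (hn : n ≠ 0) (k : ℕ) {a : ℂ} (ha : a ≠ 0) :
    ((‖a‖ ^ (1 / (2 * (n : ℝ))) : ℝ) : ℂ) * exp (I * (arg a / (2 * n))) - 4 * a ^ ((1 : ℂ) / 2) =
        ((‖a‖ ^ (1 / (2 * (n : ℝ))) : ℝ) : ℂ) * exp (I * ((arg a + 2 * k * π) / (2 * n))) ↔
      a ^ (rootExp n : ℂ) = rootParam n k := by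
  have hw : ((‖a‖ ^ (1 / (2 * (n : ℝ))) : ℝ) : ℂ) * exp (I * (arg a / (2 * n))) =
      a ^ ((1 / (2 * n) : ℝ) : ℂ) := by
    rw [cpow_ofReal_eq ha]
    congr 2
    push_cast
    ring
  have hw₀ : a ^ ((1 / (2 * n) : ℝ) : ℂ) ≠ 0 := cpow_ne_zero_iff.mpr (Or.inl ha)
  have hrot : exp (I * ((arg a + 2 * k * π) / (2 * n))) =
      exp (I * (arg a / (2 * n))) * exp (I * k * π / n) := by
    rw [← Complex.exp_add]
    congr 1
    field_simp
  have hexp : a ^ (rootExp n : ℂ) = a ^ ((1 : ℂ) / 2) / a ^ ((1 / (2 * n) : ℝ) : ℂ) := by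
    rw [← cpow_sub _ _ ha, rootExp]
    congr 1
    push_cast
    field_simp
  rw [hrot, ← mul_assoc, hw, hexp, div_eq_iff hw₀, rootParam]
  constructor <;> intro h
  · linear_combination (-1 / 4 : ℂ) * h
  · linear_combination (-4 : ℂ) * h

/-- The parameters `a_k = ((1 - e^{ikπ/n})/4)^(2n/(n-1))`, `k = 1, …, 2n-1`, are exactly
the nonzero solutions of `|a|^(1/(2n)) e^{iψ/(2n)} - 4√a = |a|^(1/(2n)) e^{i(ψ+2kπ)/(2n)}`
for some `k ∈ {1, …, 2n-1}`, i.e. the parameters for which the free critical value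
`v_- = b_{n,0}(a) - 2√a` is a non-principal `2n`-th root of `a`. -/
theorem stmt17 (n : ℕ) (hn : 2 ≤ n) :
    {a : ℂ | a ≠ 0 ∧ ∃ k : ℕ, 1 ≤ k ∧ k ≤ 2 * n - 1 ∧
        ((‖a‖ ^ (1 / (2 * (n : ℝ))) : ℝ) : ℂ) *
            Complex.exp (Complex.I * (Complex.arg a / (2 * n))) - 4 * a ^ ((1 : ℂ)/2) =
          ((‖a‖ ^ (1 / (2 * (n : ℝ))) : ℝ) : ℂ) *
            Complex.exp (Complex.I * ((Complex.arg a + 2 * k * Real.pi) / (2 * n)))} =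
      {a : ℂ | ∃ k : ℕ, 1 ≤ k ∧ k ≤ 2 * n - 1 ∧
        a = ((1 - Complex.exp (Complex.I * k * Real.pi / n)) / 4) ^
              ((2 * (n : ℂ)) / ((n : ℂ) - 1))} := by
  have hexp : (2 * (n : ℂ)) / ((n : ℂ) - 1) = (((rootExp n)⁻¹ : ℝ) : ℂ) := by
    rw [rootExp, inv_div]
    push_cast
    ring
  ext a
  simp only [Set.mem_ofPred_eq, hexp, ← rootParam.eq_1]
  constructor
  · rintro ⟨ha, k, hk₁, hk₂, h⟩
    rw [criticalValue_eq_root_iff (by omega) k ha] at h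
    exact ⟨k, hk₁, hk₂, by rw [← h, cpow_rootExp_cpow_inv hn]⟩
  · rintro ⟨k, hk₁, hk₂, rfl⟩
    obtain ⟨k', hk₁', hk₂', hk'⟩ : ∃ k', 2 ≤ k' ∧ k' ≤ 2 * n - 1 ∧
        rootParam n k ^ (((rootExp n)⁻¹ : ℝ) : ℂ) =
          rootParam n k' ^ (((rootExp n)⁻¹ : ℝ) : ℂ) := by
      rcases (show k = 1 ∨ 2 ≤ k by omega) with rfl | hk
      · exact ⟨2 * n - 1, by omega, le_rfl,
          rootParam_one_cpow_eq_rootParam_two_mul_sub_one_cpow hn⟩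
      · exact ⟨k, hk, hk₂, rfl⟩
    have ha : rootParam n k' ^ (((rootExp n)⁻¹ : ℝ) : ℂ) ≠ 0 :=
      cpow_ne_zero_iff.mpr (Or.inl (rootParam_ne_zero (by omega) (by omega)))
    rw [hk']
    refine ⟨ha, k', by omega, hk₂', ?_⟩
    rw [criticalValue_eq_root_iff (by omega) k' ha, rootParam_cpow_cpow_rootExp hk₁' (by omega)]
end
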